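/- Let 0 denote the zero function on [0,∞). The iterates T^l(0) converge pointwise, as l → ∞, to a function q : [0,∞) → [0,1]; this limit q is a fixed point of T, and it is the smallest fixed point: for every function f : [0,∞) → [0,1] with T(f) = f one has q(x) ≤ f(x) for all x ≥ 0. -/

import Mathlib

/-
Kleene iteration. `T` is monotone on measurable functions with values in `[0,1]` on `(0,∞)`,
and it maps them to measurable functions with values in `[0,1]`. Hence the iterates `Tˡ 0`
increase pointwise to a measurable `q`. Dominated convergence (in `z`, in `y`, and in the
series over `k`) gives `T (Tˡ 0) → T q`, so `q` is a fixed point. Any fixed point `f` satisfies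
`Tˡ 0 ≤ f` by induction, so `q ≤ f`.

For monotonicity and dominated convergence to apply uniformly, the inner bracket of `T` is
written as a single integral `∫_{(0,∞)} e^{-z} z^k/k! · φ(z) dz`, where `φ = 1` on `(0,y]` and
`φ = f^k` beyond. The outer average over `(0,x]` becomes the integral against the weight `1/x`.
Each layer of `T` is then a weighted integral of a `[0,1]`-valued function.
-/

open MeasureTheory Real Set Filter

noncomputable def Toper (P : ℕ → ℝ) (f : ℝ → ℝ) : ℝ → ℝ := fun x =>
  if x = 0 then
    ∑' k : ℕ, P (k + 1) * ∫ z in Ioi (0 : ℝ),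
      Real.exp (-z) * z ^ k / (Nat.factorial k : ℝ) * f z ^ k
  else
    (1 / x) * ∑' k : ℕ, P (k + 1) *
      ∫ y in Ioc (0 : ℝ) x,
        ((∫ z in Ioc (0 : ℝ) y, Real.exp (-z) * z ^ k / (Nat.factorial k : ℝ)) +
          ∫ z in Ioi y, Real.exp (-z) * z ^ k / (Nat.factorial k : ℝ) * f z ^ k)

section WeightedIntegral

variable {α : Type*} [MeasurableSpace α] {μ : Measure α} {s : Set α} {w : α → ℝ}

lemma integrableOn_mul_of_mapsTo_Icc (hw : IntegrableOn w s μ) (hs : MeasurableSet s)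
    {φ : α → ℝ} (hφm : AEStronglyMeasurable φ (μ.restrict s)) (hφ : MapsTo φ s (Icc 0 1)) :
    IntegrableOn (fun z => w z * φ z) s μ := by
  refine hw.mul_bdd hφm (c := 1) ?_
  filter_upwards [ae_restrict_mem hs] with z hz
  rw [Real.norm_eq_abs, abs_le]
  exact ⟨by linarith [(hφ hz).1], (hφ hz).2⟩

lemma setIntegral_mul_mem_Icc (hw : IntegrableOn w s μ) (hw0 : ∀ z ∈ s, 0 ≤ w z)
    (hs : MeasurableSet s) {φ : α → ℝ} (hφm : AEStronglyMeasurable φ (μ.restrict s))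
    (hφ : MapsTo φ s (Icc 0 1)) :
    ∫ z in s, w z * φ z ∂μ ∈ Icc 0 (∫ z in s, w z ∂μ) :=
  ⟨setIntegral_nonneg hs fun z hz => mul_nonneg (hw0 z hz) (hφ hz).1,
    setIntegral_mono_on (integrableOn_mul_of_mapsTo_Icc hw hs hφm hφ) hw hs
      fun z hz => mul_le_of_le_one_right (hw0 z hz) (hφ hz).2⟩

lemma setIntegral_mul_mono (hw : IntegrableOn w s μ) (hw0 : ∀ z ∈ s, 0 ≤ w z)
    (hs : MeasurableSet s) {φ ψ : α → ℝ} (hφm : AEStronglyMeasurable φ (μ.restrict s))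
    (hφ : MapsTo φ s (Icc 0 1)) (hψm : AEStronglyMeasurable ψ (μ.restrict s))
    (hψ : MapsTo ψ s (Icc 0 1)) (hφψ : ∀ z ∈ s, φ z ≤ ψ z) :
    ∫ z in s, w z * φ z ∂μ ≤ ∫ z in s, w z * ψ z ∂μ :=
  setIntegral_mono_on (integrableOn_mul_of_mapsTo_Icc hw hs hφm hφ)
    (integrableOn_mul_of_mapsTo_Icc hw hs hψm hψ) hs
    fun z hz => mul_le_mul_of_nonneg_left (hφψ z hz) (hw0 z hz)

lemma tendsto_setIntegral_mul (hw : IntegrableOn w s μ) (hs : MeasurableSet s)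
    {φ : ℕ → α → ℝ} {ψ : α → ℝ} (hφm : ∀ l, AEStronglyMeasurable (φ l) (μ.restrict s))
    (hφ : ∀ l, MapsTo (φ l) s (Icc 0 1))
    (hlim : ∀ z ∈ s, Tendsto (fun l => φ l z) atTop (nhds (ψ z))) :
    Tendsto (fun l => ∫ z in s, w z * φ l z ∂μ) atTop (nhds (∫ z in s, w z * ψ z ∂μ)) := by
  refine tendsto_integral_of_dominated_convergence (fun z => ‖w z‖)
    (fun l => hw.aestronglyMeasurable.mul (hφm l)) hw.norm (fun l => ?_) ?_
  · filter_upwards [ae_restrict_mem hs] with z hz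
    rw [norm_mul]
    exact mul_le_of_le_one_right (norm_nonneg _)
      (by rw [Real.norm_of_nonneg (hφ l hz).1]; exact (hφ l hz).2)
  · filter_upwards [ae_restrict_mem hs] with z hz
    exact (hlim z hz).const_mul _

end WeightedIntegral

noncomputable def erlangDensity (k : ℕ) (z : ℝ) : ℝ := Real.exp (-z) * z ^ k / (Nat.factorial k : ℝ)

lemma erlangDensity_nonneg (k : ℕ) {z : ℝ} (hz : 0 ≤ z) : 0 ≤ erlangDensity k z := by
  unfold erlangDensity
  positivity

lemma measurable_erlangDensity (k : ℕ) : Measurable (erlangDensity k) := by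
  unfold erlangDensity
  fun_prop

lemma eqOn_gammaIntegrand_natCast (k : ℕ) :
    EqOn (fun z : ℝ => Real.exp (-z) * z ^ ((k : ℝ) + 1 - 1)) (fun z => Real.exp (-z) * z ^ k)
      (Ioi 0) := fun z _ => by
  simp only [add_sub_cancel_right, Real.rpow_natCast]

lemma integrableOn_erlangDensity (k : ℕ) : IntegrableOn (erlangDensity k) (Ioi 0) := by
  have h := (Real.GammaIntegral_convergent (s := (k : ℝ) + 1) (by positivity)).congr_fun
    (eqOn_gammaIntegrand_natCast k) measurableSet_Ioi
  exact h.div_const _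

lemma setIntegral_erlangDensity (k : ℕ) : ∫ z in Ioi 0, erlangDensity k z = 1 := by
  have h := Real.Gamma_eq_integral (s := (k : ℝ) + 1) (by positivity)
  rw [Real.Gamma_nat_eq_factorial, setIntegral_congr_fun measurableSet_Ioi
    (eqOn_gammaIntegrand_natCast k)] at h
  unfold erlangDensity
  rw [integral_div, ← h, div_self (by positivity)]

noncomputable def cutoffPow (f : ℝ → ℝ) (k : ℕ) (y z : ℝ) : ℝ := if z ≤ y then 1 else f z ^ k

section Cutoff

variable {f g : ℝ → ℝ} {k : ℕ} {y z : ℝ}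

lemma measurable_cutoffPow (hf : Measurable f) : Measurable (cutoffPow f k y) :=
  Measurable.ite measurableSet_Iic measurable_const (hf.pow_const k)

lemma mapsTo_cutoffPow (hf : MapsTo f (Ioi 0) (Icc 0 1)) :
    MapsTo (cutoffPow f k y) (Ioi 0) (Icc 0 1) := fun z hz => by
  unfold cutoffPow
  split_ifs
  · exact ⟨zero_le_one, le_rfl⟩
  · exact ⟨pow_nonneg (hf hz).1 k, pow_le_one₀ (hf hz).1 (hf hz).2⟩

lemma cutoffPow_le_of_le (hf : MapsTo f (Ioi 0) (Icc 0 1)) {y' : ℝ} (hy : y ≤ y')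
    (hz : 0 < z) : cutoffPow f k y z ≤ cutoffPow f k y' z := by
  unfold cutoffPow
  split_ifs with h h' h'
  · exact le_rfl
  · exact absurd (h.trans hy) h'
  · exact pow_le_one₀ (hf hz).1 (hf hz).2
  · exact le_rfl

lemma cutoffPow_mono (hf : 0 ≤ f z) (hfg : f z ≤ g z) : cutoffPow f k y z ≤ cutoffPow g k y z := by
  unfold cutoffPow
  split_ifs
  · exact le_rfl
  · exact pow_le_pow_left₀ hf hfg k

lemma tendsto_cutoffPow {F : ℕ → ℝ → ℝ} (hF : Tendsto (fun l => F l z) atTop (nhds (g z))) :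
    Tendsto (fun l => cutoffPow (F l) k y z) atTop (nhds (cutoffPow g k y z)) := by
  unfold cutoffPow
  split_ifs
  · exact tendsto_const_nhds
  · exact hF.pow k

end Cutoff

noncomputable def kernelIntegral (f : ℝ → ℝ) (k : ℕ) (y : ℝ) : ℝ :=
  ∫ z in Ioi 0, erlangDensity k z * cutoffPow f k y z

section KernelIntegral

variable {f g : ℝ → ℝ} {k : ℕ}

lemma kernelIntegral_mem (hf : Measurable f) (hf1 : MapsTo f (Ioi 0) (Icc 0 1)) (y : ℝ) :
    kernelIntegral f k y ∈ Icc 0 1 := by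
  rw [← setIntegral_erlangDensity k]
  exact setIntegral_mul_mem_Icc (integrableOn_erlangDensity k)
    (fun _ hz => erlangDensity_nonneg k (le_of_lt hz)) measurableSet_Ioi
    (measurable_cutoffPow hf).aestronglyMeasurable (mapsTo_cutoffPow hf1)

lemma kernelIntegral_mono (hf : Measurable f) (hf1 : MapsTo f (Ioi 0) (Icc 0 1))
    (hg : Measurable g) (hg1 : MapsTo g (Ioi 0) (Icc 0 1)) (hfg : ∀ z, 0 < z → f z ≤ g z)
    (y : ℝ) : kernelIntegral f k y ≤ kernelIntegral g k y :=
  setIntegral_mul_mono (integrableOn_erlangDensity k)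
    (fun _ hz => erlangDensity_nonneg k (le_of_lt hz)) measurableSet_Ioi
    (measurable_cutoffPow hf).aestronglyMeasurable (mapsTo_cutoffPow hf1)
    (measurable_cutoffPow hg).aestronglyMeasurable (mapsTo_cutoffPow hg1)
    fun z hz => cutoffPow_mono (hf1 hz).1 (hfg z hz)

lemma monotone_kernelIntegral (hf : Measurable f) (hf1 : MapsTo f (Ioi 0) (Icc 0 1)) :
    Monotone (kernelIntegral f k) := fun _ _ hy =>
  setIntegral_mul_mono (integrableOn_erlangDensity k)
    (fun _ hz => erlangDensity_nonneg k (le_of_lt hz)) measurableSet_Ioi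
    (measurable_cutoffPow hf).aestronglyMeasurable (mapsTo_cutoffPow hf1)
    (measurable_cutoffPow hf).aestronglyMeasurable (mapsTo_cutoffPow hf1)
    fun _ hz => cutoffPow_le_of_le hf1 hy hz

lemma tendsto_kernelIntegral {F : ℕ → ℝ → ℝ} (hF : ∀ l, Measurable (F l))
    (hF1 : ∀ l, MapsTo (F l) (Ioi 0) (Icc 0 1))
    (hlim : ∀ z, 0 < z → Tendsto (fun l => F l z) atTop (nhds (g z))) (y : ℝ) :
    Tendsto (fun l => kernelIntegral (F l) k y) atTop (nhds (kernelIntegral g k y)) :=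
  tendsto_setIntegral_mul (integrableOn_erlangDensity k) measurableSet_Ioi
    (fun l => (measurable_cutoffPow (hF l)).aestronglyMeasurable)
    (fun l => mapsTo_cutoffPow (hF1 l)) fun z hz => tendsto_cutoffPow (hlim z hz)

lemma kernelIntegral_eq_add (hf : Measurable f) (hf1 : MapsTo f (Ioi 0) (Icc 0 1)) {y : ℝ}
    (hy : 0 ≤ y) : kernelIntegral f k y =
      (∫ z in Ioc 0 y, erlangDensity k z) + ∫ z in Ioi y, erlangDensity k z * f z ^ k := by
  have hint := integrableOn_mul_of_mapsTo_Icc (integrableOn_erlangDensity k) measurableSet_Ioi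
    (measurable_cutoffPow hf).aestronglyMeasurable (mapsTo_cutoffPow hf1 (k := k) (y := y))
  rw [kernelIntegral, ← Ioc_union_Ioi_eq_Ioi hy, setIntegral_union (Ioc_disjoint_Ioi le_rfl)
    measurableSet_Ioi (hint.mono_set Ioc_subset_Ioi_self) (hint.mono_set (Ioi_subset_Ioi hy))]
  congr 1
  · refine setIntegral_congr_fun measurableSet_Ioc fun z hz => ?_
    simp [cutoffPow, hz.2]
  · refine setIntegral_congr_fun measurableSet_Ioi fun z hz => ?_
    simp [cutoffPow, not_le.2 (mem_Ioi.1 hz)]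

end KernelIntegral

noncomputable def kernelAverage (f : ℝ → ℝ) (k : ℕ) (x : ℝ) : ℝ :=
  if x = 0 then kernelIntegral f k 0 else ∫ y in Ioc 0 x, x⁻¹ * kernelIntegral f k y

section KernelAverage

variable {f g : ℝ → ℝ} {k : ℕ}

lemma integrableOn_const_Ioc (c x : ℝ) : IntegrableOn (fun _ => c) (Ioc 0 x) :=
  integrableOn_const measure_Ioc_lt_top.ne

lemma kernelAverage_mem (hf : Measurable f) (hf1 : MapsTo f (Ioi 0) (Icc 0 1)) (x : ℝ) :
    kernelAverage f k x ∈ Icc 0 1 := by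
  unfold kernelAverage
  split_ifs with hx
  · exact kernelIntegral_mem hf hf1 0
  have hmem := setIntegral_mul_mem_Icc (φ := kernelIntegral f k) (integrableOn_const_Ioc x⁻¹ x)
    (fun _ hy => inv_nonneg.2 (hy.1.trans_le hy.2).le) measurableSet_Ioc
    (monotone_kernelIntegral hf hf1).measurable.aestronglyMeasurable
    (fun y _ => kernelIntegral_mem hf hf1 y)
  refine ⟨hmem.1, hmem.2.trans ?_⟩
  rw [setIntegral_const, Real.volume_real_Ioc, sub_zero, smul_eq_mul]
  rcases lt_or_gt_of_ne hx with hx | hx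
  · simp [hx.le]
  · simp [hx.le, hx.ne']

lemma kernelAverage_mono (hf : Measurable f) (hf1 : MapsTo f (Ioi 0) (Icc 0 1))
    (hg : Measurable g) (hg1 : MapsTo g (Ioi 0) (Icc 0 1)) (hfg : ∀ z, 0 < z → f z ≤ g z)
    (x : ℝ) : kernelAverage f k x ≤ kernelAverage g k x := by
  unfold kernelAverage
  split_ifs with hx
  · exact kernelIntegral_mono hf hf1 hg hg1 hfg 0
  · exact setIntegral_mul_mono (integrableOn_const_Ioc x⁻¹ x)
      (fun _ hy => inv_nonneg.2 (hy.1.trans_le hy.2).le) measurableSet_Ioc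
      (monotone_kernelIntegral hf hf1).measurable.aestronglyMeasurable
      (fun y _ => kernelIntegral_mem hf hf1 y)
      (monotone_kernelIntegral hg hg1).measurable.aestronglyMeasurable
      (fun y _ => kernelIntegral_mem hg hg1 y)
      fun y _ => kernelIntegral_mono hf hf1 hg hg1 hfg y

lemma tendsto_kernelAverage {F : ℕ → ℝ → ℝ} (hF : ∀ l, Measurable (F l))
    (hF1 : ∀ l, MapsTo (F l) (Ioi 0) (Icc 0 1))
    (hlim : ∀ z, 0 < z → Tendsto (fun l => F l z) atTop (nhds (g z))) (x : ℝ) :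
    Tendsto (fun l => kernelAverage (F l) k x) atTop (nhds (kernelAverage g k x)) := by
  unfold kernelAverage
  split_ifs with hx
  · exact tendsto_kernelIntegral hF hF1 hlim 0
  · exact tendsto_setIntegral_mul (integrableOn_const_Ioc x⁻¹ x) measurableSet_Ioc
      (fun l => (monotone_kernelIntegral (hF l) (hF1 l)).measurable.aestronglyMeasurable)
      (fun l y _ => kernelIntegral_mem (hF l) (hF1 l) y)
      fun y _ => tendsto_kernelIntegral hF hF1 hlim y

lemma measurable_kernelAverage (hf : Measurable f) (hf1 : MapsTo f (Ioi 0) (Icc 0 1)) :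
    Measurable (kernelAverage f k) := by
  have hmono : Monotone fun x => ∫ y in Ioc 0 x, kernelIntegral f k y := fun x x' hx =>
    setIntegral_mono_set (((monotone_kernelIntegral hf hf1).monotoneOn _).integrableOn_isCompact
      isCompact_Icc |>.mono_set Ioc_subset_Icc_self)
      (Eventually.of_forall fun y => (kernelIntegral_mem hf hf1 y).1)
      (Ioc_subset_Ioc_right hx).eventuallyLE
  have : kernelAverage f k = fun x => if x = 0 then kernelIntegral f k 0
      else x⁻¹ * ∫ y in Ioc 0 x, kernelIntegral f k y := by
    funext x
    simp only [kernelAverage, integral_const_mul]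
  rw [this]
  exact Measurable.ite (measurableSet_singleton 0) measurable_const
    (measurable_inv.mul hmono.measurable)

end KernelAverage

section Series

variable {p a : ℕ → ℝ}

lemma summable_mul_of_mem_Icc (hp : ∀ k, 0 ≤ p k) (hps : Summable p)
    (ha : ∀ k, a k ∈ Icc 0 1) : Summable fun k => p k * a k :=
  hps.of_nonneg_of_le (fun k => mul_nonneg (hp k) (ha k).1)
    fun k => mul_le_of_le_one_right (hp k) (ha k).2

lemma tsum_mul_mem_Icc (hp : ∀ k, 0 ≤ p k) (hps : Summable p) (hp1 : ∑' k, p k ≤ 1)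
    (ha : ∀ k, a k ∈ Icc 0 1) : ∑' k, p k * a k ∈ Icc 0 1 :=
  ⟨tsum_nonneg fun k => mul_nonneg (hp k) (ha k).1,
    ((summable_mul_of_mem_Icc hp hps ha).tsum_le_tsum
      (fun k => mul_le_of_le_one_right (hp k) (ha k).2) hps).trans hp1⟩

lemma summable_of_tsum_eq_one (hpsum : ∑' k, p k = 1) : Summable p := by
  by_contra h
  rw [tsum_eq_zero_of_not_summable h] at hpsum
  exact zero_ne_one hpsum

lemma summable_succ_of_tsum_eq_one (hpsum : ∑' k, p k = 1) : Summable fun k => p (k + 1) :=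
  (summable_nat_add_iff 1).2 (summable_of_tsum_eq_one hpsum)

lemma tsum_succ_le_one (hp : ∀ k, 0 ≤ p k) (hpsum : ∑' k, p k = 1) :
    ∑' k, p (k + 1) ≤ 1 := by
  have := (summable_of_tsum_eq_one hpsum).tsum_eq_zero_add
  linarith [hp 0]

end Series

section Toper

variable {P : ℕ → ℝ} {f g : ℝ → ℝ}

lemma Toper_eq_tsum (hf : Measurable f) (hf1 : MapsTo f (Ioi 0) (Icc 0 1)) (x : ℝ) :
    Toper P f x = ∑' k, P (k + 1) * kernelAverage f k x := by
  unfold Toper kernelAverage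
  split_ifs with hx
  · congr! 3 with k
    rw [kernelIntegral_eq_add hf hf1 le_rfl, Ioc_self, Measure.restrict_empty,
      integral_zero_measure, zero_add]
    rfl
  · rw [one_div, ← tsum_mul_left]
    refine tsum_congr fun k => ?_
    rw [integral_const_mul, mul_left_comm]
    congr 2
    exact setIntegral_congr_fun measurableSet_Ioc fun y hy =>
      (kernelIntegral_eq_add hf hf1 hy.1.le).symm

lemma Toper_mem (hP : ∀ k, 0 ≤ P k) (hPsum : ∑' k, P k = 1) (hf : Measurable f)
    (hf1 : MapsTo f (Ioi 0) (Icc 0 1)) (x : ℝ) : Toper P f x ∈ Icc 0 1 := by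
  rw [Toper_eq_tsum hf hf1]
  exact tsum_mul_mem_Icc (fun k => hP _) (summable_succ_of_tsum_eq_one hPsum)
    (tsum_succ_le_one hP hPsum) fun k => kernelAverage_mem hf hf1 x

lemma Toper_mono (hP : ∀ k, 0 ≤ P k) (hPsum : ∑' k, P k = 1) (hf : Measurable f)
    (hf1 : MapsTo f (Ioi 0) (Icc 0 1)) (hg : Measurable g) (hg1 : MapsTo g (Ioi 0) (Icc 0 1))
    (hfg : ∀ z, 0 < z → f z ≤ g z) (x : ℝ) : Toper P f x ≤ Toper P g x := by
  rw [Toper_eq_tsum hf hf1, Toper_eq_tsum hg hg1]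
  exact Summable.tsum_le_tsum
    (fun k => mul_le_mul_of_nonneg_left (kernelAverage_mono hf hf1 hg hg1 hfg x) (hP _))
    (summable_mul_of_mem_Icc (fun k => hP _) (summable_succ_of_tsum_eq_one hPsum)
      fun k => kernelAverage_mem hf hf1 x)
    (summable_mul_of_mem_Icc (fun k => hP _) (summable_succ_of_tsum_eq_one hPsum)
      fun k => kernelAverage_mem hg hg1 x)

lemma tendsto_Toper (hP : ∀ k, 0 ≤ P k) (hPsum : ∑' k, P k = 1) {F : ℕ → ℝ → ℝ}
    (hF : ∀ l, Measurable (F l)) (hF1 : ∀ l, MapsTo (F l) (Ioi 0) (Icc 0 1))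
    (hg : Measurable g) (hg1 : MapsTo g (Ioi 0) (Icc 0 1))
    (hlim : ∀ z, 0 < z → Tendsto (fun l => F l z) atTop (nhds (g z))) (x : ℝ) :
    Tendsto (fun l => Toper P (F l) x) atTop (nhds (Toper P g x)) := by
  simp only [Toper_eq_tsum (hF _) (hF1 _), Toper_eq_tsum hg hg1]
  refine tendsto_tsum_of_dominated_convergence (summable_succ_of_tsum_eq_one hPsum)
    (fun k => (tendsto_kernelAverage hF hF1 hlim x).const_mul _)
    (Eventually.of_forall fun l k => ?_)
  have hmem := kernelAverage_mem (k := k) (hF l) (hF1 l) x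
  rw [norm_mul, Real.norm_of_nonneg (hP _), Real.norm_of_nonneg hmem.1]
  exact mul_le_of_le_one_right (hP _) hmem.2

lemma measurable_Toper (hP : ∀ k, 0 ≤ P k) (hPsum : ∑' k, P k = 1) (hf : Measurable f)
    (hf1 : MapsTo f (Ioi 0) (Icc 0 1)) : Measurable (Toper P f) := by
  rw [funext (Toper_eq_tsum hf hf1)]
  refine measurable_of_tendsto_metrizable
    (f := fun n x => ∑ k ∈ Finset.range n, P (k + 1) * kernelAverage f k x)
    (fun n => Finset.measurable_fun_sum (Finset.range n) fun k _ =>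
      measurable_const.mul (measurable_kernelAverage hf hf1))
    (tendsto_pi_nhds.2 fun x => ?_)
  exact (summable_mul_of_mem_Icc (fun k => hP _) (summable_succ_of_tsum_eq_one hPsum)
    fun k => kernelAverage_mem hf hf1 x).hasSum.tendsto_sum_nat

end Toper

section Iterates

variable {P : ℕ → ℝ}

lemma measurable_iterate_Toper_and_mem (hP : ∀ k, 0 ≤ P k) (hPsum : ∑' k, P k = 1) (l : ℕ) :
    Measurable ((Toper P)^[l] fun _ => 0) ∧ ∀ x, (Toper P)^[l] (fun _ => 0) x ∈ Icc 0 1 := by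
  induction l with
  | zero => exact ⟨measurable_const, fun _ => ⟨le_rfl, zero_le_one⟩⟩
  | succ l ih =>
    rw [Function.iterate_succ_apply']
    exact ⟨measurable_Toper hP hPsum ih.1 fun z _ => ih.2 z,
      Toper_mem hP hPsum ih.1 fun z _ => ih.2 z⟩

lemma iterate_Toper_le_succ (hP : ∀ k, 0 ≤ P k) (hPsum : ∑' k, P k = 1) (l : ℕ) (x : ℝ) :
    (Toper P)^[l] (fun _ => 0) x ≤ (Toper P)^[l + 1] (fun _ => 0) x := by
  induction l generalizing x with
  | zero => exact ((measurable_iterate_Toper_and_mem hP hPsum 1).2 x).1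
  | succ l ih =>
    obtain ⟨hm, h1⟩ := measurable_iterate_Toper_and_mem hP hPsum l
    obtain ⟨hm', h1'⟩ := measurable_iterate_Toper_and_mem hP hPsum (l + 1)
    rw [Function.iterate_succ_apply', Function.iterate_succ_apply' (n := l + 1)]
    exact Toper_mono hP hPsum hm (fun z _ => h1 z) hm' (fun z _ => h1' z) (fun z _ => ih z) x

lemma iterate_Toper_le_of_fixed {f : ℝ → ℝ} (hP : ∀ k, 0 ≤ P k) (hPsum : ∑' k, P k = 1)
    (hf : Measurable f) (hf1 : MapsTo f (Ioi 0) (Icc 0 1))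
    (hfix : ∀ x, 0 ≤ x → Toper P f x = f x) (l : ℕ) {x : ℝ} (hx : 0 ≤ x) :
    (Toper P)^[l] (fun _ => 0) x ≤ f x := by
  induction l generalizing x with
  | zero => exact hfix x hx ▸ (Toper_mem hP hPsum hf hf1 x).1
  | succ l ih =>
    obtain ⟨hm, h1⟩ := measurable_iterate_Toper_and_mem hP hPsum l
    rw [Function.iterate_succ_apply', ← hfix x hx]
    exact Toper_mono hP hPsum hm (fun z _ => h1 z) hf hf1 (fun z hz => ih hz.le) x

end Iterates

noncomputable def minimalFixedPoint (P : ℕ → ℝ) (x : ℝ) : ℝ := ⨆ l, (Toper P)^[l] (fun _ => 0) x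

section MinimalFixedPoint

variable {P : ℕ → ℝ}

lemma tendsto_iterate_Toper (hP : ∀ k, 0 ≤ P k) (hPsum : ∑' k, P k = 1) (x : ℝ) :
    Tendsto (fun l => (Toper P)^[l] (fun _ => 0) x) atTop (nhds (minimalFixedPoint P x)) :=
  tendsto_atTop_ciSup (monotone_nat_of_le_succ fun l => iterate_Toper_le_succ hP hPsum l x)
    ⟨1, forall_mem_range.2 fun l => ((measurable_iterate_Toper_and_mem hP hPsum l).2 x).2⟩

lemma minimalFixedPoint_mem (hP : ∀ k, 0 ≤ P k) (hPsum : ∑' k, P k = 1) (x : ℝ) :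
    minimalFixedPoint P x ∈ Icc 0 1 :=
  isClosed_Icc.mem_of_tendsto (tendsto_iterate_Toper hP hPsum x)
    (Eventually.of_forall fun l => (measurable_iterate_Toper_and_mem hP hPsum l).2 x)

lemma measurable_minimalFixedPoint (hP : ∀ k, 0 ≤ P k) (hPsum : ∑' k, P k = 1) :
    Measurable (minimalFixedPoint P) :=
  Measurable.iSup fun l => (measurable_iterate_Toper_and_mem hP hPsum l).1

lemma Toper_minimalFixedPoint (hP : ∀ k, 0 ≤ P k) (hPsum : ∑' k, P k = 1) (x : ℝ) :
    Toper P (minimalFixedPoint P) x = minimalFixedPoint P x := by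
  refine tendsto_nhds_unique (tendsto_Toper hP hPsum
    (fun l => (measurable_iterate_Toper_and_mem hP hPsum l).1)
    (fun l z _ => (measurable_iterate_Toper_and_mem hP hPsum l).2 z)
    (measurable_minimalFixedPoint hP hPsum) (fun z _ => minimalFixedPoint_mem hP hPsum z)
    (fun z _ => tendsto_iterate_Toper hP hPsum z) x) ?_
  simpa only [Function.comp_def, Function.iterate_succ_apply'] using
    (tendsto_iterate_Toper hP hPsum x).comp (tendsto_add_atTop_nat 1)

lemma minimalFixedPoint_le {f : ℝ → ℝ} (hP : ∀ k, 0 ≤ P k) (hPsum : ∑' k, P k = 1)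
    (hf : Measurable f) (hf1 : MapsTo f (Ioi 0) (Icc 0 1))
    (hfix : ∀ x, 0 ≤ x → Toper P f x = f x) {x : ℝ} (hx : 0 ≤ x) :
    minimalFixedPoint P x ≤ f x :=
  ciSup_le fun l => iterate_Toper_le_of_fixed hP hPsum hf hf1 hfix l hx

end MinimalFixedPoint

theorem stmt_3_general (P : ℕ → ℝ)
    (hPnonneg : ∀ k, 0 ≤ P k) (hPsum : ∑' k, P k = 1) :
    ∃ q : ℝ → ℝ,
      (∀ x, 0 ≤ x → q x ∈ Icc (0 : ℝ) 1) ∧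
      (∀ x, 0 ≤ x →
        Tendsto (fun l => (Toper P)^[l] (fun _ => 0) x) atTop (nhds (q x))) ∧
      (∀ x, 0 ≤ x → Toper P q x = q x) ∧
      (∀ f : ℝ → ℝ, Measurable f → (∀ x, 0 ≤ x → f x ∈ Icc (0 : ℝ) 1) →
        (∀ x, 0 ≤ x → Toper P f x = f x) → ∀ x, 0 ≤ x → q x ≤ f x) :=
  ⟨minimalFixedPoint P, fun x _ => minimalFixedPoint_mem hPnonneg hPsum x,
    fun x _ => tendsto_iterate_Toper hPnonneg hPsum x,
    fun x _ => Toper_minimalFixedPoint hPnonneg hPsum x,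
    fun _ hf hf1 hfix _ hx =>
      minimalFixedPoint_le hPnonneg hPsum hf (fun z hz => hf1 z (le_of_lt hz)) hfix hx⟩

theorem stmt_3 (P : ℕ → ℝ)
    (hP0 : P 0 = 0) (hPnonneg : ∀ k, 0 ≤ P k) (hPsum : ∑' k, P k = 1)
    (hPmean : Summable fun k : ℕ => (k : ℝ) * P k) (hP1 : P 1 < 1) :
    ∃ q : ℝ → ℝ,
      (∀ x, 0 ≤ x → q x ∈ Icc (0 : ℝ) 1) ∧
      (∀ x, 0 ≤ x →
        Tendsto (fun l => (Toper P)^[l] (fun _ => 0) x) atTop (nhds (q x))) ∧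
      (∀ x, 0 ≤ x → Toper P q x = q x) ∧
      (∀ f : ℝ → ℝ, Measurable f → (∀ x, 0 ≤ x → f x ∈ Icc (0 : ℝ) 1) →
        (∀ x, 0 ≤ x → Toper P f x = f x) → ∀ x, 0 ≤ x → q x ≤ f x) :=
  stmt_3_general P hPnonneg hPsum
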